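/- Let λ be a real number with λ < 0 or λ > 1, set t = −arccos((1−λ+ρ(λ))/λ) and m̂ = (1+ρ(λ))/(2−λ+ρ(λ)). Then ω₁(m̂,t) = r₁(λ), ω₂(m̂,t) = r₂(λ), ω₃(m̂,t) = r₃(λ). (That is, the common generating line of the hyperboloid Q_λ and the extended oloid passes through the point (r₁(λ), r₂(λ), r₃(λ)) of the edge of regression, where it is tangent to the edge of regression and to the touching curve C_λ.) -/
import Mathlib


open Real

/-- `ρ(λ) = sgn(λ)·√(1−λ+λ²)`. -/
noncomputable def ρ (l : ℝ) : ℝ := Real.sign l * Real.sqrt (1 - l + l ^ 2)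

/-- First coordinate of the generating line parametrization of the extended oloid. -/
noncomputable def ω₁ (m t : ℝ) : ℝ := (1 - m) * sin t

/-- Second coordinate of the generating line parametrization of the extended oloid. -/
noncomputable def ω₂ (m t : ℝ) : ℝ :=
  (1 - m) * (-(1/2) - cos t) + m * (1/2 - cos t / (1 + cos t))

/-- Third coordinate of the generating line parametrization of the extended oloid. -/
noncomputable def ω₃ (m t : ℝ) : ℝ := m * Real.sqrt (1 + 2 * cos t) / (1 + cos t)

/-- First coordinate of the edge of regression in terms of the system parameter. -/
noncomputable def r₁ (l : ℝ) : ℝ :=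
  Real.sqrt ((l - 1) ^ 3 * (2 - l + 2 * ρ l)) / (l * (2 - l + ρ l))

/-- Second coordinate of the edge of regression in terms of the system parameter. -/
noncomputable def r₂ (l : ℝ) : ℝ :=
  (l ^ 2 + 2 * l - 2 + (l - 2) * ρ l) / (2 * l * (2 - l + ρ l))

/-- Third coordinate of the edge of regression in terms of the system parameter. -/
noncomputable def r₃ (l : ℝ) : ℝ :=
  Real.sign l * Real.sqrt (l * (2 - l + 2 * ρ l)) / (2 - l + ρ l)

lemma master_stmt17 (l r s : ℝ) (hs : s = 1 ∨ s = -1)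
    (hl0 : l ≠ 0)
    (habs : |l| = s * l) (habs1 : |l - 1| = s * (l - 1))
    (hden : 0 < 2 - l + r)
    (h1r : 1 + r ≠ 0)
    (hprod : 0 ≤ (l - 1) * (2 - l + 2 * r))
    (hprod2 : 0 ≤ l * (2 - l + 2 * r))
    (hr2 : r ^ 2 = 1 - l + l ^ 2)
    (hx1 : -1 ≤ (1 - l + r) / l) (hx2 : (1 - l + r) / l ≤ 1) :
    ω₁ ((1 + r) / (2 - l + r)) (-Real.arccos ((1 - l + r) / l))
        = Real.sqrt ((l - 1) ^ 3 * (2 - l + 2 * r)) / (l * (2 - l + r)) ∧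
    ω₂ ((1 + r) / (2 - l + r)) (-Real.arccos ((1 - l + r) / l))
        = (l ^ 2 + 2 * l - 2 + (l - 2) * r) / (2 * l * (2 - l + r)) ∧
    ω₃ ((1 + r) / (2 - l + r)) (-Real.arccos ((1 - l + r) / l))
        = s * Real.sqrt (l * (2 - l + 2 * r)) / (2 - l + r) := by
  have hden' : 2 - l + r ≠ 0 := hden.ne'
  have hc : Real.cos (-Real.arccos ((1 - l + r) / l)) = (1 - l + r) / l := by
    rw [Real.cos_neg]; exact Real.cos_arccos hx1 hx2
  have hsin : Real.sin (-Real.arccos ((1 - l + r) / l))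
      = -Real.sqrt (1 - ((1 - l + r) / l) ^ 2) := by
    rw [Real.sin_neg, Real.sin_arccos]
  have hx2' : 1 - ((1 - l + r) / l) ^ 2 = (l - 1) * (2 - l + 2 * r) / l ^ 2 := by
    field_simp
    linear_combination -hr2
  have hS : Real.sqrt (1 - ((1 - l + r) / l) ^ 2)
      = Real.sqrt ((l - 1) * (2 - l + 2 * r)) / (s * l) := by
    rw [hx2', Real.sqrt_div hprod, Real.sqrt_sq_eq_abs, habs]
  have h1c : 1 + (1 - l + r) / l = (1 + r) / l := by field_simp; ring
  have h1c' : 1 + (1 - l + r) / l ≠ 0 := by rw [h1c]; exact div_ne_zero h1r hl0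
  refine ⟨?_, ?_, ?_⟩
  · rw [ω₁, hsin, hS,
      show (l - 1) ^ 3 * (2 - l + 2 * r) = (l - 1) ^ 2 * ((l - 1) * (2 - l + 2 * r)) by ring,
      Real.sqrt_mul (sq_nonneg _), Real.sqrt_sq_eq_abs, habs1]
    rcases hs with rfl | rfl <;> field_simp <;> ring
  · rw [ω₂, hc, h1c, div_div_div_cancel_right₀]
    · field_simp
      ring
    · exact hl0
  · rw [ω₃, hc,
      show 1 + 2 * ((1 - l + r) / l) = l * (2 - l + 2 * r) / l ^ 2 by field_simp; ring,
      Real.sqrt_div hprod2, Real.sqrt_sq_eq_abs, habs, h1c]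
    rcases hs with rfl | rfl <;> field_simp <;> ring

/-- For `λ < 0` or `λ > 1`, with `t = −arccos((1−λ+ρ(λ))/λ)` and
`mh = (1+ρ(λ))/(2−λ+ρ(λ))`, the common generating line of the hyperboloid `Q_λ` and
the extended oloid passes through the point `(r₁(λ), r₂(λ), r₃(λ))` of the edge of
regression. -/
theorem stmt_17 (l : ℝ) (hl : l < 0 ∨ 1 < l) :
    let t := -Real.arccos ((1 - l + ρ l) / l)
    let mh := (1 + ρ l) / (2 - l + ρ l)
    ω₁ mh t = r₁ l ∧ ω₂ mh t = r₂ l ∧ ω₃ mh t = r₃ l := by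
  intro t mh
  have ht : t = -Real.arccos ((1 - l + ρ l) / l) := rfl
  have hmh : mh = (1 + ρ l) / (2 - l + ρ l) := rfl
  have hq2 : Real.sqrt (1 - l + l ^ 2) ^ 2 = 1 - l + l ^ 2 :=
    Real.sq_sqrt (by nlinarith [sq_nonneg (l - 1)])
  have hqnn : 0 ≤ Real.sqrt (1 - l + l ^ 2) := Real.sqrt_nonneg _
  set q := Real.sqrt (1 - l + l ^ 2) with hqdef
  rcases hl with hneg | hpos
  · have hl0 : l ≠ 0 := hneg.ne
    have hsgn : Real.sign l = -1 := Real.sign_of_neg hneg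
    have hρ : ρ l = -q := by rw [ρ, hsgn]; ring
    have hq1 : 1 < q := by nlinarith
    have hqlt : q < 2 - l := by nlinarith
    have h2q : 2 - l < 2 * q := by nlinarith
    have key := master_stmt17 l (-q) (-1) (Or.inr rfl) hl0
      (by rw [abs_of_neg hneg]; ring)
      (by rw [abs_of_neg (by linarith : l - 1 < 0)]; ring)
      (by linarith)
      (by intro h; nlinarith)
      (by nlinarith)
      (by nlinarith)
      (by nlinarith)
      (by rw [le_div_iff_of_neg hneg]; nlinarith)
      (by rw [div_le_iff_of_neg hneg]; nlinarith)
    rw [ht, hmh]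
    simp only [r₁, r₂, r₃, hρ, hsgn]
    exact key
  · have hlpos : (0 : ℝ) < l := by linarith
    have hl0 : l ≠ 0 := hlpos.ne'
    have hsgn : Real.sign l = 1 := Real.sign_of_pos hlpos
    have hρ : ρ l = q := by rw [ρ, hsgn, one_mul]
    have hqgt : l - 1 < q := by nlinarith
    have hq21 : q < 2 * l - 1 := by nlinarith
    have key := master_stmt17 l q 1 (Or.inl rfl) hl0
      (by rw [abs_of_pos hlpos]; ring)
      (by rw [abs_of_pos (by linarith : (0:ℝ) < l - 1)]; ring)
      (by linarith)
      (by positivity)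
      (by nlinarith)
      (by nlinarith)
      (by nlinarith)
      (by rw [le_div_iff₀ hlpos]; nlinarith)
      (by rw [div_le_one hlpos]; nlinarith)
    rw [ht, hmh]
    simp only [r₁, r₂, r₃, hρ, hsgn]
    exact key
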